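/- arXiv:0705.1040 — 2 statements merged into one kernel-verified Lean document; each statement's English description precedes it below -/
import Mathlib

section
/- For every finite set Q of words there exists a finite set Q' of words such that Σ_{Q'} is completely invariant, l(Σ_{Q'}) ≤ l(Σ_Q), and there exists a finite set W̃ of finite words with Σ_{Q'} ⊆ Σ_Q ⊆ ⋃_{w ∈ W̃} wΣ_{Q'}. -/
open Set Metric Filter MeasureTheory
open scoped Classical

/-- The word `[ω 0, ω 1, …, ω (n-1)]` read off from the sequence `ω`. -/
def wordOf {p : ℕ} (ω : ℕ → Fin p) (n : ℕ) : List (Fin p) :=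
  (List.range n).map ω

/-- The cylinder sets `Δ_{i₁…iₙ} = g_{i₁…i_{n-1}}(I_{iₙ})` of the iterated function
system given by the big interval `I`, the subintervals `Isub i` and the maps `g i`;
by convention `Δ_∅ = I`. -/
def cylOf {p : ℕ} (I : Set ℝ) (Isub : Fin p → Set ℝ) (g : Fin p → ℝ → ℝ) :
    List (Fin p) → Set ℝ
  | [] => I
  | [i] => Isub i
  | i :: j :: w => g i '' cylOf I Isub g (j :: w)

/-- The sequence `ω` contains the word `w` as a sub-word starting at position `n`. -/
def containsAt {p : ℕ} (ω : ℕ → Fin p) (w : List (Fin p)) (n : ℕ) : Prop :=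
  ∀ k : ℕ, (hk : k < w.length) → ω (n + k) = w.get ⟨k, hk⟩

/-- The sequence `ω` belongs to `Σ_Q`, i.e. it contains no word of `Q` as a sub-word. -/
def avoids {p : ℕ} (Q : Finset (List (Fin p))) (ω : ℕ → Fin p) : Prop :=
  ∀ w ∈ Q, ∀ n : ℕ, ¬ containsAt ω w n

/-- The limit set `Λ_Q = π(Σ_Q)`: points lying, for some `ω ∈ Σ_Q`, in all the
cylinders `Δ_{ω₀…ω_{n-1}}`. -/
def limitSetOf {p : ℕ} (I : Set ℝ) (Isub : Fin p → Set ℝ) (g : Fin p → ℝ → ℝ)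
    (Q : Finset (List (Fin p))) : Set ℝ :=
  { x | ∃ ω : ℕ → Fin p, avoids Q ω ∧ ∀ n : ℕ, x ∈ cylOf I Isub g (wordOf ω n) }

/-- `gIter g ω n = g_{i_n … i_1} = g_{ω (n-1)} ∘ ⋯ ∘ g_{ω 0}`. -/
def gIter {p : ℕ} (g : Fin p → ℝ → ℝ) (ω : ℕ → Fin p) : ℕ → ℝ → ℝ
  | 0 => id
  | n + 1 => g (ω n) ∘ gIter g ω n

/-- The derivative of the composition `gIter g ω n` at `x` (chain rule product). -/
noncomputable def gIterDer {p : ℕ} (g gder : Fin p → ℝ → ℝ) (ω : ℕ → Fin p)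
    (n : ℕ) (x : ℝ) : ℝ :=
  ∏ k ∈ Finset.range n, gder (ω k) (gIter g ω k x)

/-- Prepending the finite word `w` to the infinite sequence `ω`. -/
def prependWord {p : ℕ} (w : List (Fin p)) (ω : ℕ → Fin p) : ℕ → Fin p :=
  fun n => if h : n < w.length then w.get ⟨n, h⟩ else ω (n - w.length)

/-- `l(Σ_Q)`: the minimum, over all finite sets `Q'` of words with `Σ_{Q'} = Σ_Q`,
of the maximal length `l(Q')` of words of `Q'`. -/
noncomputable def minRepLen {p : ℕ} (Q : Finset (List (Fin p))) : ℕ :=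
  sInf { n : ℕ | ∃ Q' : Finset (List (Fin p)),
    (∀ ω : ℕ → Fin p, avoids Q' ω ↔ avoids Q ω) ∧ Q'.sup List.length = n }

/-- A `C^{1+Lip}` expansive and transitive Markov system `(Λ_Q, f)`. -/
structure ExpansiveMarkovSystem (p : ℕ) where
  /-- the alphabet is nonempty -/
  hp : 0 < p
  /-- the ambient closed interval `I` -/
  I : Set ℝ
  hI : ∃ a b : ℝ, a < b ∧ I = Set.Icc a b
  /-- the pairwise disjoint closed subintervals `I₁, …, I_p` -/
  Isub : Fin p → Set ℝ
  hIsub : ∀ i, ∃ a b : ℝ, a < b ∧ Isub i = Set.Icc a b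
  hsubI : ∀ i, Isub i ⊆ I
  hdisj : ∀ i j, i ≠ j → Disjoint (Isub i) (Isub j)
  /-- the contractions `g i`, defined on `⋃ j, Isub j` -/
  g : Fin p → ℝ → ℝ
  /-- the derivative of `g i` on `⋃ j, Isub j` -/
  gder : Fin p → ℝ → ℝ
  hg_inj : ∀ i, Set.InjOn (g i) (⋃ j, Isub j)
  hg_range : ∀ i, g i '' (⋃ j, Isub j) ⊆ interior (Isub i)
  hg_deriv : ∀ i, ∀ x ∈ ⋃ j, Isub j,
    HasDerivWithinAt (g i) (gder i x) (⋃ j, Isub j) x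
  hgder_ne : ∀ i, ∀ x ∈ ⋃ j, Isub j, gder i x ≠ 0
  hgder_cont : ∀ i, ContinuousOn (gder i) (⋃ j, Isub j)
  /-- `log |g i'|` is Lipschitz on the domain -/
  hgder_lip : ∀ i, ∃ θ : ℝ, ∀ x ∈ ⋃ j, Isub j, ∀ y ∈ ⋃ j, Isub j,
    abs (Real.log (abs (gder i x)) - Real.log (abs (gder i y))) ≤ θ * |x - y|
  /-- the expanding map `f`, with `f (g i x) = x` -/
  f : ℝ → ℝ
  /-- the derivative `f'` of `f` on the ranges of the `g i` -/
  fder : ℝ → ℝ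
  hf : ∀ i, ∀ x ∈ ⋃ j, Isub j, f (g i x) = x
  hfder : ∀ i, ∀ x ∈ ⋃ j, Isub j, fder (g i x) = (gder i x)⁻¹
  /-- the generator (expansivity) condition: `d_n → 0` -/
  hgen : ∀ ε : ℝ, 0 < ε → ∃ N : ℕ, ∀ w : List (Fin p), N ≤ w.length →
    Metric.diam (cylOf I Isub g w) < ε
  /-- the finite set of forbidden words -/
  Q : Finset (List (Fin p))
  /-- `Σ_Q` is completely invariant: `σ(Σ_Q) = Σ_Q` -/
  hQinv : ∀ ω : ℕ → Fin p, avoids Q ω →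
    ∃ ω' : ℕ → Fin p, avoids Q ω' ∧ ∀ n : ℕ, ω' (n + 1) = ω n
  /-- `f|Λ_Q` is topologically transitive -/
  htrans : ∀ U V : Set ℝ, IsOpen U → IsOpen V →
    (U ∩ limitSetOf I Isub g Q).Nonempty → (V ∩ limitSetOf I Isub g Q).Nonempty →
    ∃ n : ℕ, ∃ x ∈ U ∩ limitSetOf I Isub g Q, f^[n] x ∈ V

namespace ExpansiveMarkovSystem

variable {p : ℕ} (S : ExpansiveMarkovSystem p)

/-- The common domain `⋃ j, I_j` of the maps `g i`. -/
def dom : Set ℝ := ⋃ j, S.Isub j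

/-- The cylinder `Δ_w` associated to the word `w`. -/
def cyl (w : List (Fin p)) : Set ℝ := cylOf S.I S.Isub S.g w

/-- The limit set `Λ_Q`. -/
def limitSet : Set ℝ := limitSetOf S.I S.Isub S.g S.Q

/-- The domain of `f`, i.e. the union of the ranges of the `g i`. -/
def domF : Set ℝ := ⋃ i, S.g i '' S.dom

/-- The derivative `(fⁿ)'(x)` of the `n`-th iterate of `f` at `x`. -/
noncomputable def derIter (n : ℕ) (x : ℝ) : ℝ :=
  ∏ k ∈ Finset.range n, S.fder (S.f^[k] x)

/-- The Lyapunov exponent `χ(x) = limsup (1/n) log |(fⁿ)'(x)|`. -/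
noncomputable def lyap (x : ℝ) : ℝ :=
  Filter.limsup (fun n : ℕ => Real.log |S.derIter n x| / n) Filter.atTop

/-- The set `H` of points of `Λ_Q` with infinitely many hyperbolic instants. -/
def hypSet : Set ℝ :=
  { x ∈ S.limitSet | ∃ c₁ : ℝ, 0 < c₁ ∧ ∃ c₂ : ℝ, 0 < c₂ ∧
      ∃ n : ℕ → ℕ, StrictMono n ∧
        ∃ r : ℕ → ℝ, (∀ k, 0 < r k) ∧ Antitone r ∧
          Filter.Tendsto r Filter.atTop (nhds 0) ∧
          ∀ k : ℕ,
            (∀ y ∈ Metric.ball x (r k), ∀ j < n k, S.f^[j] y ∈ S.domF) ∧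
            c₁ < Metric.diam (S.f^[n k] '' Metric.ball x (r k)) ∧
            (∀ y ∈ Metric.ball x (r k), ∀ z ∈ Metric.ball x (r k),
              |S.derIter (n k) y| / |S.derIter (n k) z| < c₂) }

/-- `x` is a parabolic periodic point: `f^m(x) = x` and `|(f^m)'(x)| = 1`. -/
def IsParabolicPeriodic (x : ℝ) : Prop :=
  x ∈ S.limitSet ∧ ∃ m : ℕ, 1 ≤ m ∧ S.f^[m] x = x ∧ |S.derIter m x| = 1

/-- `ν` is a `t`-conformal (Borel probability) measure supported on `Λ_Q`. -/
def IsConformal (ν : Measure ℝ) (t : ℝ) : Prop :=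
  IsProbabilityMeasure ν ∧ ν S.limitSetᶜ = 0 ∧
    ∀ A : Set ℝ, MeasurableSet A → A ⊆ S.limitSet → Set.InjOn S.f A →
      ν (S.f '' A) = ∫⁻ x in A, ENNReal.ofReal (|S.fder x| ^ t) ∂ν

/-- `t_c = inf {t ≥ 0 : a t-conformal measure on Λ_Q exists}`. -/
noncomputable def tc : ℝ :=
  sInf { t : ℝ | 0 ≤ t ∧ ∃ ν : Measure ℝ, S.IsConformal ν t }

/-- `n` is a hyperbolic time for `x` with exponent `α`. -/
def IsHypTime (α : ℝ) (x : ℝ) (n : ℕ) : Prop :=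
  ∀ k : ℕ, 1 ≤ k → k ≤ n → Real.exp (k * α) ≤ |S.derIter k (S.f^[n - k] x)|

/-- `H_HT(α)`: the points of `Λ_Q` with infinitely many hyperbolic times with exponent `α`. -/
def HHT (α : ℝ) : Set ℝ :=
  { x ∈ S.limitSet | ∀ N : ℕ, ∃ n : ℕ, N ≤ n ∧ S.IsHypTime α x n }

end ExpansiveMarkovSystem

/-!
Let `R` be a representation of `Σ_Q` and `l = l(Σ_Q)`. Forbid exactly the words of length `l`
that do not admit arbitrarily long admissible extensions to the left. Every word of length `l`
occurring in a sequence of the new system is admissible, so the new system lies in `Σ_Q`; by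
König's lemma each of its sequences can be extended one step to the left, which gives complete
invariance. Finitely many words are forbidden, so there is a uniform `M` such that none of them
has an admissible left extension of length `M`; hence after its first `M` letters every
sequence of `Σ_Q` lies in the new system.
-/

lemma exists_representation_minRepLen {p : ℕ} (Q : Finset (List (Fin p))) :
    ∃ R : Finset (List (Fin p)),
      (∀ ω : ℕ → Fin p, avoids R ω ↔ avoids Q ω) ∧ R.sup List.length = minRepLen Q :=
  Nat.sInf_mem (s := {n | ∃ R : Finset (List (Fin p)),
    (∀ ω : ℕ → Fin p, avoids R ω ↔ avoids Q ω) ∧ R.sup List.length = n})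
    ⟨_, Q, fun _ => Iff.rfl, rfl⟩

lemma minRepLen_le_sup_length {p : ℕ} (Q : Finset (List (Fin p))) :
    minRepLen Q ≤ Q.sup List.length :=
  Nat.sInf_le ⟨Q, fun _ => Iff.rfl, rfl⟩

namespace Subshift

variable {p : ℕ}

def window (ω : ℕ → Fin p) (n m : ℕ) : List (Fin p) :=
  (List.range m).map fun k => ω (n + k)

@[simp]
lemma length_window (ω : ℕ → Fin p) (n m : ℕ) : (window ω n m).length = m := by
  simp [window]

@[simp]
lemma getElem_window (ω : ℕ → Fin p) (n m k : ℕ) (h : k < (window ω n m).length) :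
    (window ω n m)[k] = ω (n + k) := by
  simp [window]

lemma window_add (ω : ℕ → Fin p) (n a b : ℕ) :
    window ω n (a + b) = window ω n a ++ window ω (n + a) b := by
  simp [window, List.range_add, Function.comp_def, add_assoc]

lemma window_prefix (ω : ℕ → Fin p) (n : ℕ) {m m' : ℕ} (h : m ≤ m') :
    window ω n m <+: window ω n m' := by
  obtain ⟨k, rfl⟩ := Nat.exists_eq_add_of_le h
  rw [window_add]
  exact List.prefix_append _ _

lemma prependWord_add_length (w : List (Fin p)) (ω : ℕ → Fin p) (n : ℕ) :
    prependWord w ω (n + w.length) = ω n := by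
  simp [prependWord]

lemma window_prependWord_add_length (w : List (Fin p)) (ω : ℕ → Fin p) (n m : ℕ) :
    window (prependWord w ω) (n + w.length) m = window ω n m := by
  simp only [window, Nat.add_right_comm n w.length, prependWord_add_length]

lemma window_prependWord_zero (w : List (Fin p)) (ω : ℕ → Fin p) (m : ℕ) :
    window (prependWord w ω) 0 (w.length + m) = w ++ window ω 0 m := by
  rw [window_add, Nat.zero_add, ← Nat.zero_add w.length, window_prependWord_add_length]
  congr 1
  apply List.ext_getElem (by simp)
  intro k hk _
  simp_all [prependWord]

lemma window_shift (ω : ℕ → Fin p) (n m M : ℕ) :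
    window (fun k => ω (k + M)) n m = window ω (n + M) m := by
  simp only [window, Nat.add_right_comm n M]

lemma containsAt_iff_window_eq {ω : ℕ → Fin p} {q : List (Fin p)} {n : ℕ} :
    containsAt ω q n ↔ window ω n q.length = q := by
  simp [containsAt, List.ext_getElem_iff, eq_comm]

lemma exists_containsAt_of_infix {ω : ℕ → Fin p} {q : List (Fin p)} {n m : ℕ}
    (h : q <:+: window ω n m) : ∃ j, containsAt ω q (n + j) := by
  obtain ⟨s, t, hst⟩ := h
  refine ⟨s.length, fun k hk => ?_⟩
  have hlt : s.length + k < (window ω n m).length := by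
    rw [← hst]
    simp only [List.length_append]
    omega
  have := List.getElem_of_eq hst.symm hlt
  simp only [getElem_window, List.append_assoc, List.getElem_append_right, hk,
    List.getElem_append_left, le_add_iff_nonneg_right, zero_le, add_tsub_cancel_left] at this
  simpa [Nat.add_assoc] using this

lemma prependWord_window_shift (ω : ℕ → Fin p) (M : ℕ) :
    prependWord (window ω 0 M) (fun n => ω (n + M)) = ω := by
  funext n
  simp only [prependWord, length_window]
  split_ifs with h
  · simp
  · congr 1
    omega

noncomputable def wordsOfLength (p l : ℕ) : Finset (List (Fin p)) :=
  (List.finite_length_eq (Fin p) l).toFinset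

lemma mem_wordsOfLength {l : ℕ} {a : List (Fin p)} :
    a ∈ wordsOfLength p l ↔ a.length = l := by
  simp [wordsOfLength]

def Admissible (R : Finset (List (Fin p))) (a : List (Fin p)) : Prop :=
  ∀ q ∈ R, ¬ q <:+: a

variable {R : Finset (List (Fin p))}

lemma Admissible.of_infix {a b : List (Fin p)} (h : Admissible R a) (hba : b <:+: a) :
    Admissible R b :=
  fun q hq hqb => h q hq (hqb.trans hba)

lemma admissible_window_of_avoids {ω : ℕ → Fin p} (h : avoids R ω) (n m : ℕ) :
    Admissible R (window ω n m) := fun q hq hinf =>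
  let ⟨_, hj⟩ := exists_containsAt_of_infix hinf
  h q hq _ hj

def LeftExtendable (R : Finset (List (Fin p))) (N : ℕ) (a : List (Fin p)) : Prop :=
  ∃ u : List (Fin p), u.length = N ∧ Admissible R (u ++ a)

lemma LeftExtendable.mono {N M : ℕ} {a : List (Fin p)} (hNM : N ≤ M)
    (h : LeftExtendable R M a) : LeftExtendable R N a := by
  obtain ⟨u, rfl, hu⟩ := h
  refine ⟨u.drop (u.length - N), by simp only [List.length_drop]; omega, hu.of_infix ?_⟩
  conv_rhs => rw [← u.take_append_drop (u.length - N), List.append_assoc]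
  exact (List.suffix_append _ _).isInfix

lemma LeftExtendable.exists_cons {N : ℕ} {a : List (Fin p)}
    (h : LeftExtendable R (N + 1) a) : ∃ i, LeftExtendable R N (i :: a) := by
  obtain ⟨u, hu, hadm⟩ := h
  rcases u.eq_nil_or_concat with rfl | ⟨v, i, rfl⟩
  · simp at hu
  · exact ⟨i, v, by simpa using hu, by simpa using hadm⟩

def InfLeftExtendable (R : Finset (List (Fin p))) (a : List (Fin p)) : Prop :=
  ∀ N, LeftExtendable R N a

lemma InfLeftExtendable.admissible {a : List (Fin p)} (h : InfLeftExtendable R a) :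
    Admissible R a := by
  obtain ⟨u, hu, hadm⟩ := h 0
  rwa [List.length_eq_zero_iff.mp hu, List.nil_append] at hadm

lemma InfLeftExtendable.of_prefix {a b : List (Fin p)} (h : InfLeftExtendable R b)
    (hab : a <+: b) : InfLeftExtendable R a := fun N =>
  let ⟨u, hu, hadm⟩ := h N
  ⟨u, hu, hadm.of_infix ((List.prefix_append_right_inj u).mpr hab).isInfix⟩

/-- König's lemma: pigeonhole over the finitely many letters, then `LeftExtendable.mono`. -/
lemma InfLeftExtendable.exists_cons {a : List (Fin p)} (h : InfLeftExtendable R a) :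
    ∃ i, InfLeftExtendable R (i :: a) := by
  by_contra! hfail
  choose N hN using fun i => not_forall.mp (hfail i)
  obtain ⟨i, hi⟩ := (h (Finset.univ.sup N + 1)).exists_cons
  exact hN i (hi.mono (Finset.le_sup (Finset.mem_univ i)))

noncomputable def nonExtendableWords (R : Finset (List (Fin p))) (l : ℕ) :
    Finset (List (Fin p)) :=
  (wordsOfLength p l).filter fun a => ¬ InfLeftExtendable R a

lemma mem_nonExtendableWords {l : ℕ} {a : List (Fin p)} :
    a ∈ nonExtendableWords R l ↔ a.length = l ∧ ¬ InfLeftExtendable R a := by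
  rw [nonExtendableWords, Finset.mem_filter, mem_wordsOfLength]

lemma sup_length_nonExtendableWords_le (R : Finset (List (Fin p))) (l : ℕ) :
    (nonExtendableWords R l).sup List.length ≤ l :=
  Finset.sup_le fun _ ha => (mem_nonExtendableWords.mp ha).1.le

lemma avoids_nonExtendableWords_iff {l : ℕ} {ω : ℕ → Fin p} :
    avoids (nonExtendableWords R l) ω ↔ ∀ n, InfLeftExtendable R (window ω n l) := by
  constructor
  · intro h n
    by_contra hn
    exact h _ (mem_nonExtendableWords.mpr ⟨length_window .., hn⟩) n
      (containsAt_iff_window_eq.mpr (by rw [length_window]))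
  · intro h a ha n hc
    rw [mem_nonExtendableWords] at ha
    rw [containsAt_iff_window_eq, ha.1] at hc
    exact ha.2 (hc ▸ h n)

lemma exists_prependWord_avoids_nonExtendableWords {l : ℕ} {ω : ℕ → Fin p}
    (h : avoids (nonExtendableWords R l) ω) :
    ∃ i, avoids (nonExtendableWords R l) (prependWord [i] ω) := by
  rw [avoids_nonExtendableWords_iff] at h
  obtain ⟨i, hi⟩ := (h 0).exists_cons
  refine ⟨i, avoids_nonExtendableWords_iff.mpr fun n => ?_⟩
  cases n with
  | zero =>
    refine hi.of_prefix ?_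
    have := window_prefix (prependWord [i] ω) 0 (Nat.le_add_left l [i].length)
    rwa [window_prependWord_zero] at this
  | succ n => exact (window_prependWord_add_length [i] ω n l).symm ▸ h n

lemma avoids_of_avoids_nonExtendableWords {l : ℕ} (hR : ∀ q ∈ R, q.length ≤ l)
    {ω : ℕ → Fin p} (h : avoids (nonExtendableWords R l) ω) : avoids R ω := by
  intro q hq n hc
  rw [containsAt_iff_window_eq] at hc
  rw [avoids_nonExtendableWords_iff] at h
  exact (h n).admissible q hq (hc ▸ window_prefix ω n (hR q hq)).isInfix

lemma exists_forall_not_leftExtendable (R : Finset (List (Fin p))) (l : ℕ) :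
    ∃ M, ∀ a ∈ nonExtendableWords R l, ¬ LeftExtendable R M a := by
  have hfail : ∀ a ∈ nonExtendableWords R l, ∃ N, ¬ LeftExtendable R N a :=
    fun a ha => not_forall.mp (mem_nonExtendableWords.mp ha).2
  choose! N hN using hfail
  exact ⟨(nonExtendableWords R l).sup N, fun a ha hM =>
    hN a ha (hM.mono (Finset.le_sup ha))⟩

lemma avoids_nonExtendableWords_shift {l M : ℕ}
    (hM : ∀ a ∈ nonExtendableWords R l, ¬ LeftExtendable R M a) {ω : ℕ → Fin p}
    (h : avoids R ω) : avoids (nonExtendableWords R l) (fun n => ω (n + M)) := by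
  refine avoids_nonExtendableWords_iff.mpr fun n => ?_
  by_contra hn
  refine hM _ (mem_nonExtendableWords.mpr ⟨length_window .., hn⟩)
    ⟨window ω n M, length_window .., ?_⟩
  rw [window_shift, ← window_add]
  exact admissible_window_of_avoids h n (M + l)

end Subshift

/-- For every finite set `Q` of words there exists a finite set `Q'` of words
such that `Σ_{Q'}` is completely invariant, `l(Σ_{Q'}) ≤ l(Σ_Q)`, and there is a finite set
`W̃` of finite words with `Σ_{Q'} ⊆ Σ_Q ⊆ ⋃_{w ∈ W̃} w Σ_{Q'}`. -/
theorem exists_completely_invariant_subsystem {p : ℕ} (Q : Finset (List (Fin p))) :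
    ∃ Q' : Finset (List (Fin p)),
      (∀ ω : ℕ → Fin p, avoids Q' ω →
        ∃ ω'' : ℕ → Fin p, avoids Q' ω'' ∧ ∀ n : ℕ, ω'' (n + 1) = ω n) ∧
      minRepLen Q' ≤ minRepLen Q ∧
      ∃ W : Finset (List (Fin p)),
        (∀ ω : ℕ → Fin p, avoids Q' ω → avoids Q ω) ∧
        (∀ ω : ℕ → Fin p, avoids Q ω →
          ∃ w ∈ W, ∃ ω'' : ℕ → Fin p, avoids Q' ω'' ∧ ω = prependWord w ω'') := by
  obtain ⟨R, hRQ, hRlen⟩ := exists_representation_minRepLen Q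
  have hR : ∀ q ∈ R, q.length ≤ minRepLen Q := Finset.sup_le_iff.mp hRlen.le
  obtain ⟨M, hM⟩ := Subshift.exists_forall_not_leftExtendable R (minRepLen Q)
  refine ⟨Subshift.nonExtendableWords R (minRepLen Q), fun ω hω => ?_, ?_,
    Subshift.wordsOfLength p M, fun ω hω => ?_, fun ω hω => ?_⟩
  · obtain ⟨i, hi⟩ := Subshift.exists_prependWord_avoids_nonExtendableWords hω
    exact ⟨prependWord [i] ω, hi, Subshift.prependWord_add_length [i] ω⟩
  · exact (minRepLen_le_sup_length _).trans (Subshift.sup_length_nonExtendableWords_le R _)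
  · exact (hRQ ω).mp (Subshift.avoids_of_avoids_nonExtendableWords hR hω)
  · exact ⟨Subshift.window ω 0 M, Subshift.mem_wordsOfLength.mpr (Subshift.length_window ..),
      _, Subshift.avoids_nonExtendableWords_shift hM ((hRQ ω).mpr hω),
      (Subshift.prependWord_window_shift ω M).symm⟩
end

section
/- Let (Λ_Q, f) be a C^{1+Lip} expansive and transitive Markov system and let ν be a t-conformal measure on Λ_Q for some t ≥ 0. Then ν(Δ_{i_1…i_n} ∩ Λ_Q) > 0 for every word (i_1…i_n) whose cylinder Δ_{i_1…i_n} has nonempty intersection with Λ_Q. -/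
open Set Metric Filter MeasureTheory
open scoped Classical

/-!
Suppose `ν (Δ_w ∩ Λ_Q) = 0`. Conformality writes `ν (f A)` as an integral over `A`, so `f`, and
hence every iterate of `f`, maps `ν`-null compact subsets of `Λ_Q` to null sets. Since `ν` is a
probability measure on `Λ_Q`, some cylinder `Δ_u` of length `n ≥ max (l(Q), |w|)` meets `Λ_Q` in
positive measure, and transitivity yields `x ∈ Δ_w ∩ Λ_Q` with `f^k x ∈ Δ_u`. As `u` is at least
as long as every forbidden word, the first `k` symbols of the code of `x` may be followed by the
code of any point of `Δ_u ∩ Λ_Q` without creating a forbidden word. Hence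
`Δ_u ∩ Λ_Q ⊆ f^k (Δ_w ∩ Λ_Q)`, a null set: a contradiction.
-/

section Words

variable {p : ℕ}

@[simp]
lemma wordOf_length (ω : ℕ → Fin p) (n : ℕ) : (wordOf ω n).length = n := by
  simp [wordOf]

lemma wordOf_succ (ω : ℕ → Fin p) (n : ℕ) :
    wordOf ω (n + 1) = ω 0 :: wordOf (fun i => ω (i + 1)) n := by
  simp [wordOf, List.range_succ_eq_map, List.map_map]

lemma wordOf_add (ω : ℕ → Fin p) (m k : ℕ) :
    wordOf ω (m + k) = wordOf ω m ++ (List.range k).map (fun i => ω (m + i)) := by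
  simp [wordOf, List.range_add, List.map_map]

lemma wordOf_eq_wordOf_iff {ω ω' : ℕ → Fin p} {n : ℕ} :
    wordOf ω n = wordOf ω' n ↔ ∀ i < n, ω i = ω' i := by
  simp [wordOf, List.map_inj_left]

lemma avoids.shift {Q : Finset (List (Fin p))} {ω : ℕ → Fin p} (h : avoids Q ω) (k : ℕ) :
    avoids Q (fun i => ω (i + k)) := by
  intro q hq n hn
  refine h q hq (n + k) fun j hj => ?_
  rw [Nat.add_right_comm]
  exact hn j hj

lemma prependWord_wordOf_apply (ω ζ : ℕ → Fin p) (k i : ℕ) :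
    prependWord (wordOf ω k) ζ i = if i < k then ω i else ζ (i - k) := by
  simp [prependWord, wordOf]

lemma prependWord_wordOf_apply_add (ω ζ : ℕ → Fin p) (k i : ℕ) :
    prependWord (wordOf ω k) ζ (i + k) = ζ i := by
  simp [prependWord_wordOf_apply]

lemma prependWord_wordOf_apply_of_lt {ω ζ : ℕ → Fin p} {k n : ℕ}
    (hagree : ∀ i < n, ω (i + k) = ζ i) {i : ℕ} (hi : i < k + n) :
    prependWord (wordOf ω k) ζ i = ω i := by
  rw [prependWord_wordOf_apply]
  split_ifs with hik
  · rfl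
  · rw [← hagree (i - k) (by omega), Nat.sub_add_cancel (not_lt.1 hik)]

/-- An occurrence of a forbidden word in the spliced sequence lies within the first `k + n`
symbols, taken from `ω`, or after the first `k`, taken from `ζ`. -/
lemma avoids_prependWord_wordOf {Q : Finset (List (Fin p))} {ω ζ : ℕ → Fin p} {k n : ℕ}
    (hω : avoids Q ω) (hζ : avoids Q ζ) (hQ : ∀ q ∈ Q, q.length ≤ n)
    (hagree : ∀ i < n, ω (i + k) = ζ i) :
    avoids Q (prependWord (wordOf ω k) ζ) := by
  intro q hq j hj
  have hqn := hQ q hq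
  by_cases hjq : j + q.length ≤ k + n
  · refine hω q hq j fun m hm => ?_
    rw [← prependWord_wordOf_apply_of_lt hagree (by omega)]
    exact hj m hm
  · refine hζ q hq (j - k) fun m hm => ?_
    rw [← hj m hm, show j + m = j - k + m + k by omega, prependWord_wordOf_apply_add]

end Words

namespace ExpansiveMarkovSystem

variable {p : ℕ} (S : ExpansiveMarkovSystem p)

section Cylinders

lemma isCompact_Isub (i : Fin p) : IsCompact (S.Isub i) := by
  obtain ⟨a, b, -, h⟩ := S.hIsub i
  exact h ▸ isCompact_Icc

lemma Isub_subset_dom (i : Fin p) : S.Isub i ⊆ S.dom := subset_iUnion _ i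

lemma isCompact_dom : IsCompact S.dom := isCompact_iUnion S.isCompact_Isub

lemma continuousOn_g (i : Fin p) : ContinuousOn (S.g i) S.dom :=
  fun x hx => (S.hg_deriv i x hx).continuousWithinAt

lemma cyl_cons_of_ne_nil (i : Fin p) {l : List (Fin p)} (hl : l ≠ []) :
    S.cyl (i :: l) = S.g i '' S.cyl l := by
  obtain ⟨j, l, rfl⟩ := List.exists_cons_of_ne_nil hl
  rfl

lemma cyl_cons_subset_Isub (i : Fin p) (l : List (Fin p)) : S.cyl (i :: l) ⊆ S.Isub i := by
  induction l generalizing i with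
  | nil => exact Subset.rfl
  | cons j l ih =>
    rw [S.cyl_cons_of_ne_nil i (List.cons_ne_nil j l)]
    exact (image_mono ((ih j).trans (S.Isub_subset_dom j))).trans
      ((S.hg_range i).trans interior_subset)

lemma cyl_subset_I (l : List (Fin p)) : S.cyl l ⊆ S.I := by
  cases l with
  | nil => exact Subset.rfl
  | cons i l => exact (S.cyl_cons_subset_Isub i l).trans (S.hsubI i)

lemma cyl_subset_dom {l : List (Fin p)} (hl : l ≠ []) : S.cyl l ⊆ S.dom := by
  obtain ⟨i, l, rfl⟩ := List.exists_cons_of_ne_nil hl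
  exact (S.cyl_cons_subset_Isub i l).trans (S.Isub_subset_dom i)

lemma isCompact_cyl (l : List (Fin p)) : IsCompact (S.cyl l) := by
  induction l with
  | nil =>
    obtain ⟨a, b, -, h⟩ := S.hI
    exact (h ▸ isCompact_Icc : IsCompact S.I)
  | cons i l ih =>
    rcases eq_or_ne l [] with rfl | hl
    · exact S.isCompact_Isub i
    · rw [S.cyl_cons_of_ne_nil i hl]
      exact ih.image_of_continuousOn ((S.continuousOn_g i).mono (S.cyl_subset_dom hl))

lemma cyl_nonempty (l : List (Fin p)) : (S.cyl l).Nonempty := by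
  induction l with
  | nil =>
    obtain ⟨a, b, hab, h⟩ := S.hI
    exact (h ▸ nonempty_Icc.2 hab.le : S.I.Nonempty)
  | cons i l ih =>
    rcases eq_or_ne l [] with rfl | hl
    · obtain ⟨a, b, hab, h⟩ := S.hIsub i
      exact (h ▸ nonempty_Icc.2 hab.le : (S.Isub i).Nonempty)
    · rw [S.cyl_cons_of_ne_nil i hl]
      exact ih.image _

lemma cyl_append_subset (l l' : List (Fin p)) : S.cyl (l ++ l') ⊆ S.cyl l := by
  induction l with
  | nil => exact S.cyl_subset_I _
  | cons i l ih =>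
    rcases eq_or_ne l [] with rfl | hl
    · exact S.cyl_cons_subset_Isub i l'
    · rw [List.cons_append, S.cyl_cons_of_ne_nil i hl,
        S.cyl_cons_of_ne_nil i (by simp [hl])]
      exact image_mono ih

lemma antitone_cyl_wordOf (ω : ℕ → Fin p) : Antitone fun n => S.cyl (wordOf ω n) := by
  intro m n hmn
  obtain ⟨k, rfl⟩ := Nat.exists_eq_add_of_le hmn
  simpa only [wordOf_add] using S.cyl_append_subset _ _

lemma disjoint_cyl {u v : List (Fin p)} (hlen : u.length = v.length) (huv : u ≠ v) :
    Disjoint (S.cyl u) (S.cyl v) := by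
  induction u generalizing v with
  | nil => exact absurd (List.eq_nil_of_length_eq_zero hlen.symm).symm huv
  | cons i u ih =>
    obtain ⟨j, v, rfl⟩ := List.exists_cons_of_length_eq_add_one hlen.symm
    rcases eq_or_ne i j with rfl | hij
    · have hlen' : u.length = v.length := by simpa using hlen
      have huv' : u ≠ v := fun h => huv (h ▸ rfl)
      have hu : u ≠ [] := by
        rintro rfl
        exact huv' (List.eq_nil_of_length_eq_zero hlen'.symm).symm
      have hv : v ≠ [] := fun h => hu (List.eq_nil_of_length_eq_zero (hlen'.trans (by simp [h])))
      rw [S.cyl_cons_of_ne_nil i hu, S.cyl_cons_of_ne_nil i hv]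
      exact (ih hlen' huv').image (S.hg_inj i) (S.cyl_subset_dom hu) (S.cyl_subset_dom hv)
    · exact (S.hdisj i j hij).mono (S.cyl_cons_subset_Isub i u) (S.cyl_cons_subset_Isub j v)

lemma eq_of_mem_cyl {x : ℝ} {u v : List (Fin p)} (hu : x ∈ S.cyl u) (hv : x ∈ S.cyl v)
    (hlen : u.length = v.length) : u = v := by
  by_contra h
  exact disjoint_left.1 (S.disjoint_cyl hlen h) hu hv

lemma mapsTo_f_cyl_cons (i : Fin p) {l : List (Fin p)} (hl : l ≠ []) :
    MapsTo S.f (S.cyl (i :: l)) (S.cyl l) := by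
  rw [S.cyl_cons_of_ne_nil i hl]
  rintro _ ⟨y, hy, rfl⟩
  rwa [S.hf i y (S.cyl_subset_dom hl hy)]

end Cylinders

section Coding

/-- The set `{π ω}`, without the admissibility condition `ω ∈ Σ_Q`. -/
def codingSet (ω : ℕ → Fin p) : Set ℝ := ⋂ n, S.cyl (wordOf ω n)

lemma codingSet_nonempty (ω : ℕ → Fin p) : (S.codingSet ω).Nonempty :=
  IsCompact.nonempty_iInter_of_sequence_nonempty_isCompact_isClosed _
    (fun n => S.antitone_cyl_wordOf ω n.le_succ) (fun _ => S.cyl_nonempty _)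
    (S.isCompact_cyl _) (fun _ => (S.isCompact_cyl _).isClosed)

lemma codingSet_subsingleton (ω : ℕ → Fin p) : (S.codingSet ω).Subsingleton := by
  intro x hx y hy
  by_contra hne
  obtain ⟨N, hN⟩ := S.hgen (dist x y) (dist_pos.2 hne)
  have hxy : dist x y ≤ diam (S.cyl (wordOf ω N)) :=
    dist_le_diam_of_mem (S.isCompact_cyl _).isBounded (mem_iInter.1 hx N) (mem_iInter.1 hy N)
  exact (hN (wordOf ω N) (by simp)).not_ge hxy

lemma f_mem_codingSet {ω : ℕ → Fin p} {x : ℝ} (hx : x ∈ S.codingSet ω) :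
    S.f x ∈ S.codingSet (fun i => ω (i + 1)) := by
  refine mem_iInter.2 fun n => S.antitone_cyl_wordOf _ n.le_succ ?_
  have hx' := mem_iInter.1 hx (n + 1 + 1)
  rw [wordOf_succ] at hx'
  exact S.mapsTo_f_cyl_cons _ (List.ne_nil_of_length_pos (by simp)) hx'

lemma iterate_f_mem_codingSet {ω : ℕ → Fin p} {x : ℝ} (hx : x ∈ S.codingSet ω) (k : ℕ) :
    S.f^[k] x ∈ S.codingSet (fun i => ω (i + k)) := by
  induction k with
  | zero => simpa using hx
  | succ k ih =>
    rw [Function.iterate_succ_apply']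
    simpa only [Nat.add_right_comm _ 1 k, add_assoc] using S.f_mem_codingSet ih

lemma mem_limitSet_iff {x : ℝ} :
    x ∈ S.limitSet ↔ ∃ ω, avoids S.Q ω ∧ x ∈ S.codingSet ω := by
  simp only [codingSet, mem_iInter]
  rfl

lemma mapsTo_f_limitSet : MapsTo S.f S.limitSet S.limitSet := by
  intro x hx
  obtain ⟨ω, hω, hxω⟩ := S.mem_limitSet_iff.1 hx
  exact S.mem_limitSet_iff.2 ⟨_, hω.shift 1, S.f_mem_codingSet hxω⟩

lemma limitSet_subset_domF : S.limitSet ⊆ S.domF := by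
  rintro x ⟨ω, -, hx⟩
  have hx2 : x ∈ S.cyl [ω 0, ω 1] := by simpa [cyl, wordOf, List.range_succ] using hx 2
  exact mem_iUnion.2 ⟨ω 0, image_mono (S.Isub_subset_dom (ω 1)) hx2⟩

lemma limitSet_eq_iInter_iUnion :
    S.limitSet = ⋂ n, ⋃ ω ∈ {ω | avoids S.Q ω}, S.cyl (wordOf ω n) := by
  refine Subset.antisymm (fun x ⟨ω, hω, hx⟩ => mem_iInter.2 fun n => mem_biUnion hω (hx n)) ?_
  intro x hx
  choose Ω hΩ hx using fun n => mem_iUnion₂.1 (mem_iInter.1 hx n)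
  -- the codes `Ω n` all describe `x`, so they agree wherever both are defined
  have hcoh : ∀ n i, i < n → Ω n i = Ω (i + 1) i := by
    intro n i hin
    have h := S.eq_of_mem_cyl (S.antitone_cyl_wordOf (Ω n) (show i + 1 ≤ n by omega) (hx n))
      (hx (i + 1)) (by simp)
    exact wordOf_eq_wordOf_iff.1 h i i.lt_succ_self
  refine ⟨fun i => Ω (i + 1) i, fun q hq j hj => ?_, fun n => ?_⟩
  · refine hΩ (j + q.length) q hq j fun m hm => ?_
    rw [hcoh _ _ (by omega)]
    exact hj m hm
  · rw [wordOf_eq_wordOf_iff.2 fun i hi => (hcoh n i hi).symm]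
    exact hx n

lemma isClosed_limitSet : IsClosed S.limitSet := by
  rw [limitSet_eq_iInter_iUnion]
  refine isClosed_iInter fun n => ?_
  rw [← biUnion_image (f := fun ω => wordOf ω n) (g := S.cyl)]
  refine Set.Finite.isClosed_biUnion ?_ fun l _ => (S.isCompact_cyl l).isClosed
  exact (List.finite_length_eq (Fin p) n).subset (by rintro _ ⟨ω, -, rfl⟩; simp)

lemma exists_isOpen_inter_limitSet_eq (w : List (Fin p)) :
    ∃ U, IsOpen U ∧ U ∩ S.limitSet = S.cyl w ∩ S.limitSet := by
  refine ⟨(⋃ l ∈ {l | l.length = w.length ∧ l ≠ w}, S.cyl l)ᶜ, ?_, ?_⟩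
  · refine (Set.Finite.isClosed_biUnion ?_ fun l _ => (S.isCompact_cyl l).isClosed).isOpen_compl
    exact (List.finite_length_eq _ _).subset fun l hl => hl.1
  ext x
  refine and_congr_left fun hx => ⟨fun hU => ?_, fun hxw hU => ?_⟩
  · obtain ⟨ω, -, hxω⟩ := S.mem_limitSet_iff.1 hx
    have hxω' := mem_iInter.1 hxω w.length
    by_contra hxw
    exact hU (mem_biUnion ⟨by simp, fun h => hxw (h ▸ hxω')⟩ hxω')
  · obtain ⟨l, ⟨hl, hlw⟩, hxl⟩ := mem_iUnion₂.1 hU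
    exact hlw (S.eq_of_mem_cyl hxl hxw hl)

lemma exists_iterate_mem_cyl {w u : List (Fin p)} (hw : (S.cyl w ∩ S.limitSet).Nonempty)
    (hu : (S.cyl u ∩ S.limitSet).Nonempty) :
    ∃ k : ℕ, ∃ x ∈ S.cyl w ∩ S.limitSet, S.f^[k] x ∈ S.cyl u := by
  obtain ⟨U, hUo, hU⟩ := S.exists_isOpen_inter_limitSet_eq w
  obtain ⟨V, hVo, hV⟩ := S.exists_isOpen_inter_limitSet_eq u
  obtain ⟨k, x, hx, hkx⟩ := S.htrans U V hUo hVo (by rwa [← hU] at hw) (by rwa [← hV] at hu)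
  have hkx' : S.f^[k] x ∈ V ∩ S.limitSet := ⟨hkx, S.mapsTo_f_limitSet.iterate k hx.2⟩
  rw [hV] at hkx'
  exact ⟨k, x, hU ▸ hx, hkx'.1⟩

lemma cyl_inter_limitSet_subset_image_iterate {w u : List (Fin p)} {k : ℕ} {x : ℝ}
    (hx : x ∈ S.cyl w ∩ S.limitSet) (hkx : S.f^[k] x ∈ S.cyl u)
    (hQ : ∀ q ∈ S.Q, q.length ≤ u.length) (hw : w.length ≤ k + u.length) :
    S.cyl u ∩ S.limitSet ⊆ S.f^[k] '' (S.cyl w ∩ S.limitSet) := by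
  obtain ⟨ω, hω, hxω⟩ := S.mem_limitSet_iff.1 hx.2
  rintro z ⟨hzu, hz⟩
  obtain ⟨ζ, hζ, hzζ⟩ := S.mem_limitSet_iff.1 hz
  have hωu : wordOf (fun i => ω (i + k)) u.length = u :=
    S.eq_of_mem_cyl (mem_iInter.1 (S.iterate_f_mem_codingSet hxω k) _) hkx (by simp)
  have hζu : wordOf ζ u.length = u := S.eq_of_mem_cyl (mem_iInter.1 hzζ _) hzu (by simp)
  have hagree := wordOf_eq_wordOf_iff.1 (hωu.trans hζu.symm)
  obtain ⟨y, hy⟩ := S.codingSet_nonempty (prependWord (wordOf ω k) ζ)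
  refine ⟨y, ⟨?_, S.mem_limitSet_iff.2 ⟨_, avoids_prependWord_wordOf hω hζ hQ hagree, hy⟩⟩, ?_⟩
  · have hωw : wordOf ω w.length = w := S.eq_of_mem_cyl (mem_iInter.1 hxω _) hx.1 (by simp)
    rw [← hωw, ← wordOf_eq_wordOf_iff.2 fun i hi => prependWord_wordOf_apply_of_lt hagree
      (hi.trans_le hw)]
    exact mem_iInter.1 hy _
  · have hky := S.iterate_f_mem_codingSet hy k
    simp only [prependWord_wordOf_apply_add] at hky
    exact S.codingSet_subsingleton ζ hky hzζ

end Coding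

section Conformal

lemma image_f_eq_iUnion {C : Set ℝ} (hC : C ⊆ S.domF) :
    S.f '' C = ⋃ i, S.dom ∩ S.g i ⁻¹' C := by
  ext y
  constructor
  · rintro ⟨x, hx, rfl⟩
    obtain ⟨i, z, hz, rfl⟩ := mem_iUnion.1 (hC hx)
    exact mem_iUnion.2 ⟨i, by rw [S.hf i z hz]; exact ⟨hz, hx⟩⟩
  · intro hy
    obtain ⟨i, hy, hgy⟩ := mem_iUnion.1 hy
    exact ⟨_, hgy, S.hf i y hy⟩

lemma isCompact_image_f {C : Set ℝ} (hC : IsCompact C) (hCΛ : C ⊆ S.limitSet) :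
    IsCompact (S.f '' C) := by
  rw [S.image_f_eq_iUnion (hCΛ.trans S.limitSet_subset_domF)]
  exact isCompact_iUnion fun i => S.isCompact_dom.of_isClosed_subset
    ((S.continuousOn_g i).preimage_isClosed_of_isClosed S.isCompact_dom.isClosed hC.isClosed)
    inter_subset_left

lemma measure_image_f_eq_zero {t : ℝ} {ν : Measure ℝ} (hν : S.IsConformal ν t) {A : Set ℝ}
    (hA : MeasurableSet A) (hAΛ : A ⊆ S.limitSet) (h0 : ν A = 0) : ν (S.f '' A) = 0 := by
  have hpiece : ∀ i, ν (S.f '' (A ∩ S.g i '' S.dom)) = 0 := by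
    intro i
    have hinj : InjOn S.f (A ∩ S.g i '' S.dom) := by
      rintro _ ⟨-, y₁, hy₁, rfl⟩ _ ⟨-, y₂, hy₂, rfl⟩ h
      rw [S.hf i y₁ hy₁, S.hf i y₂ hy₂] at h
      rw [h]
    have hmeas : MeasurableSet (A ∩ S.g i '' S.dom) :=
      hA.inter (S.isCompact_dom.image_of_continuousOn (S.continuousOn_g i)).isClosed.measurableSet
    rw [hν.2.2 _ hmeas (inter_subset_left.trans hAΛ) hinj]
    exact setLIntegral_measure_zero _ _ (measure_mono_null inter_subset_left h0)
  refine measure_mono_null ?_ (measure_iUnion_null hpiece)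
  rw [← image_iUnion, ← inter_iUnion]
  exact image_mono (subset_inter Subset.rfl (hAΛ.trans S.limitSet_subset_domF))

lemma measure_image_iterate_f_eq_zero {t : ℝ} {ν : Measure ℝ} (hν : S.IsConformal ν t)
    {C : Set ℝ} (hC : IsCompact C) (hCΛ : C ⊆ S.limitSet) (h0 : ν C = 0) (k : ℕ) :
    ν (S.f^[k] '' C) = 0 := by
  have hΛ : ∀ k, S.f^[k] '' C ⊆ S.limitSet := fun k =>
    (image_mono hCΛ).trans (S.mapsTo_f_limitSet.iterate k).image_subset
  suffices IsCompact (S.f^[k] '' C) ∧ ν (S.f^[k] '' C) = 0 from this.2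
  induction k with
  | zero => simpa using ⟨hC, h0⟩
  | succ k ih =>
    rw [Function.iterate_succ', image_comp]
    exact ⟨S.isCompact_image_f ih.1 (hΛ k),
      S.measure_image_f_eq_zero hν ih.1.isClosed.measurableSet (hΛ k) ih.2⟩

lemma exists_measure_cyl_inter_limitSet_ne_zero {t : ℝ} {ν : Measure ℝ}
    (hν : S.IsConformal ν t) (n : ℕ) :
    ∃ u : List (Fin p), u.length = n ∧ ν (S.cyl u ∩ S.limitSet) ≠ 0 := by
  by_contra! h
  have hΛ : ν S.limitSet = 0 := by
    refine measure_mono_null (fun x hx => ?_)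
      ((measure_biUnion_null_iff (List.finite_length_eq (Fin p) n).countable).2 h)
    obtain ⟨ω, -, hxω⟩ := S.mem_limitSet_iff.1 hx
    exact mem_biUnion (by simp : wordOf ω n ∈ {l | l.length = n}) ⟨mem_iInter.1 hxω n, hx⟩
  have huniv := measure_union_null hΛ hν.2.1
  rw [union_compl_self, @measure_univ _ _ _ hν.1] at huniv
  exact one_ne_zero huniv

end Conformal

end ExpansiveMarkovSystem

theorem conformal_pos_on_cylinders_general {p : ℕ} (S : ExpansiveMarkovSystem p)
    (t : ℝ) (ν : Measure ℝ) (hν : S.IsConformal ν t)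
    (w : List (Fin p)) (hw : (S.cyl w ∩ S.limitSet).Nonempty) :
    0 < ν (S.cyl w ∩ S.limitSet) := by
  obtain ⟨u, hu_len, hu⟩ :=
    S.exists_measure_cyl_inter_limitSet_ne_zero hν (max (S.Q.sup List.length) w.length)
  obtain ⟨k, x, hx, hkx⟩ := S.exists_iterate_mem_cyl hw (nonempty_of_measure_ne_zero hu)
  refine pos_iff_ne_zero.2 fun h0 => hu (measure_mono_null ?_
    (S.measure_image_iterate_f_eq_zero hν ((S.isCompact_cyl w).inter_right S.isClosed_limitSet)
      inter_subset_right h0 k))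
  refine S.cyl_inter_limitSet_subset_image_iterate hx hkx (fun q hq => ?_) ?_
  · exact hu_len ▸ (Finset.le_sup hq).trans (le_max_left _ _)
  · have := le_max_right (S.Q.sup List.length) w.length
    omega

/-- A `t`-conformal measure is strictly positive on every cylinder with
nonempty intersection with `Λ_Q`. -/
theorem conformal_pos_on_cylinders {p : ℕ} (S : ExpansiveMarkovSystem p)
    (t : ℝ) (ht : 0 ≤ t) (ν : Measure ℝ) (hν : S.IsConformal ν t)
    (w : List (Fin p)) (hw : (S.cyl w ∩ S.limitSet).Nonempty) :
    0 < ν (S.cyl w ∩ S.limitSet) :=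
  conformal_pos_on_cylinders_general S t ν hν w hw
end
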